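/- Let d_x = id_n − 2 e_{x,x} for x ∈ {k+1,…,n} and d_x = id_n for x ∈ [k], and set D = ∑_{x∈[n]} e_{x,x} ⊗ d_x and P = ∑_{x,y} e_{x,y} ⊗ e_{y,x}. Let ř = D P and R(λ) = D + λ^{−1} P (equivalently L(λ) = L^(0) + λ^{−1}L^(1) with L^(0) = D, L^(1) = P). For A = ∑ e_{x,y} ⊗ A_{x,y} write A₁ = ∑ e_{x,y} ⊗ id ⊗ A_{x,y} and A₂ = ∑ id ⊗ e_{x,y} ⊗ A_{x,y}, and let ř₁₂ = ř ⊗ id. Then, as operators on ℂ^n ⊗ ℂ^n ⊗ ℂ^n, ř₁₂ · D₁ D₂ = D₁ D₂ · ř₁₂, ř₁₂ · D₁ P₂ = P₁ D₂ · ř₁₂, and ř₁₂ · P₁ D₂ = D₁ P₂ · ř₁₂. -/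

import Mathlib

open Matrix Kronecker BigOperators

noncomputable section

def E (n : ℕ) (x y : Fin n) : Matrix (Fin n) (Fin n) ℂ := Matrix.single x y 1

/-- `d_x = id` for `x ∈ [k]` and `d_x = id − 2 e_{x,x}` for `x ∈ {k+1,…,n}`
(`0`-indexed: `x ∈ [k]` means `(x : ℕ) < k`). -/
def dsmall (n k : ℕ) (x : Fin n) : Matrix (Fin n) (Fin n) ℂ :=
  if (x : ℕ) < k then 1 else 1 - (2 : ℂ) • E n x x

/-- `D = ∑_x e_{x,x} ⊗ d_x`. -/
def Dten (n k : ℕ) : Matrix (Fin n × Fin n) (Fin n × Fin n) ℂ :=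
  ∑ x : Fin n, E n x x ⊗ₖ dsmall n k x

/-- `P = ∑_{x,y} e_{x,y} ⊗ e_{y,x}`. -/
def Pmat (n : ℕ) : Matrix (Fin n × Fin n) (Fin n × Fin n) ℂ :=
  ∑ x : Fin n, ∑ y : Fin n, E n x y ⊗ₖ E n y x

/-- For `A = ∑ e_{x,y} ⊗ A_{x,y}`, the operator `A₁ = ∑ e_{x,y} ⊗ id ⊗ A_{x,y}`
on `ℂ^n ⊗ ℂ^n ⊗ ℂ^n`. -/
def op1 (n : ℕ) (A : Matrix (Fin n × Fin n) (Fin n × Fin n) ℂ) :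
    Matrix (Fin n × Fin n × Fin n) (Fin n × Fin n × Fin n) ℂ :=
  Matrix.of fun p q =>
    A (p.1, p.2.2) (q.1, q.2.2) * (if p.2.1 = q.2.1 then 1 else 0)

/-- For `A = ∑ e_{x,y} ⊗ A_{x,y}`, the operator `A₂ = ∑ id ⊗ e_{x,y} ⊗ A_{x,y}`. -/
def op2 (n : ℕ) (A : Matrix (Fin n × Fin n) (Fin n × Fin n) ℂ) :
    Matrix (Fin n × Fin n × Fin n) (Fin n × Fin n × Fin n) ℂ :=
  (1 : Matrix (Fin n) (Fin n) ℂ) ⊗ₖ A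

/-- `ř₁₂ = ř ⊗ id`. -/
def r12 (n : ℕ) (r : Matrix (Fin n × Fin n) (Fin n × Fin n) ℂ) :
    Matrix (Fin n × Fin n × Fin n) (Fin n × Fin n × Fin n) ℂ :=
  Matrix.reindex (Equiv.prodAssoc (Fin n) (Fin n) (Fin n))
    (Equiv.prodAssoc (Fin n) (Fin n) (Fin n)) (r ⊗ₖ (1 : Matrix (Fin n) (Fin n) ℂ))

def sg (n k : ℕ) (a b : Fin n) : ℂ := if k ≤ (a : ℕ) ∧ b = a then -1 else 1

lemma sg_comm (n k : ℕ) (a b : Fin n) : sg n k a b = sg n k b a := by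
  unfold sg
  by_cases h : a = b
  · subst h; rfl
  · simp [h, Ne.symm h]

lemma E_apply (n : ℕ) (x y i j : Fin n) :
    E n x y i j = if i = x ∧ j = y then 1 else 0 := by
  simp [E, Matrix.single, eq_comm, and_comm]

lemma dsmall_apply (n k : ℕ) (x b d : Fin n) :
    dsmall n k x b d = if d = b then (if k ≤ (x : ℕ) ∧ b = x then -1 else 1) else 0 := by
  unfold dsmall
  by_cases hx : (x : ℕ) < k
  · simp [hx, Matrix.one_apply, Nat.not_le.mpr hx, eq_comm]
  · simp only [hx, if_false, Matrix.sub_apply, Matrix.one_apply, Matrix.smul_apply, E_apply,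
      Nat.not_lt.mp hx, true_and, smul_eq_mul]
    by_cases hd : d = b <;> by_cases hb : b = x
    · subst hd; subst hb; norm_num
    · subst hd; simp [hb]
    · subst hb; simp [hd, Ne.symm hd]
    · simp [hd, Ne.symm hd]
      intro h1 h2; exact absurd (h2.trans h1.symm) hd

lemma Dten_apply (n k : ℕ) (p q : Fin n × Fin n) :
    Dten n k p q = if q = p then sg n k p.1 p.2 else 0 := by
  obtain ⟨a, b⟩ := p; obtain ⟨c, d⟩ := q
  simp only [Dten, Matrix.sum_apply, kroneckerMap_apply, E_apply, dsmall_apply, sg]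
  rw [Finset.sum_eq_single a]
  · by_cases hc : c = a <;> by_cases hd : d = b <;> simp_all [Prod.ext_iff]
  · intro x _ hx; simp [Ne.symm hx]
  · simp

lemma Pmat_apply (n : ℕ) (p q : Fin n × Fin n) :
    Pmat n p q = if q.2 = p.1 ∧ q.1 = p.2 then 1 else 0 := by
  obtain ⟨a, b⟩ := p; obtain ⟨c, d⟩ := q
  simp only [Pmat, Matrix.sum_apply, kroneckerMap_apply, E_apply]
  rw [Finset.sum_eq_single a]
  · rw [Finset.sum_eq_single b]
    · by_cases hc : c = b <;> by_cases hd : d = a <;> simp_all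
    · intro y _ hy; simp [Ne.symm hy]
    · simp
  · intro x _ hx
    apply Finset.sum_eq_zero; intro y _; simp [Ne.symm hx]
  · simp

lemma op1D_apply (n k : ℕ) (p q : Fin n × Fin n × Fin n) :
    op1 n (Dten n k) p q = if q = p then sg n k p.1 p.2.2 else 0 := by
  obtain ⟨a, b, c⟩ := p; obtain ⟨d, e, f⟩ := q
  simp only [op1, Matrix.of_apply, Dten_apply, Prod.ext_iff]
  by_cases h1 : d = a <;> by_cases h2 : e = b <;> by_cases h3 : f = c <;>
    simp_all [eq_comm]

lemma op2D_apply (n k : ℕ) (p q : Fin n × Fin n × Fin n) :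
    op2 n (Dten n k) p q = if q = p then sg n k p.2.1 p.2.2 else 0 := by
  obtain ⟨a, b, c⟩ := p; obtain ⟨d, e, f⟩ := q
  simp only [op2, kroneckerMap_apply, Matrix.one_apply, Dten_apply, Prod.ext_iff]
  by_cases h1 : d = a <;> by_cases h2 : e = b <;> by_cases h3 : f = c <;>
    simp_all [eq_comm]

lemma op1P_apply (n : ℕ) (p q : Fin n × Fin n × Fin n) :
    op1 n (Pmat n) p q = if q = (p.2.2, p.2.1, p.1) then 1 else 0 := by
  obtain ⟨a, b, c⟩ := p; obtain ⟨d, e, f⟩ := q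
  simp only [op1, Matrix.of_apply, Pmat_apply, Prod.ext_iff]
  by_cases h1 : d = c <;> by_cases h2 : e = b <;> by_cases h3 : f = a <;>
    simp_all [eq_comm]

lemma op2P_apply (n : ℕ) (p q : Fin n × Fin n × Fin n) :
    op2 n (Pmat n) p q = if q = (p.1, p.2.2, p.2.1) then 1 else 0 := by
  obtain ⟨a, b, c⟩ := p; obtain ⟨d, e, f⟩ := q
  simp only [op2, kroneckerMap_apply, Matrix.one_apply, Pmat_apply, Prod.ext_iff]
  by_cases h1 : d = a <;> by_cases h2 : e = c <;> by_cases h3 : f = b <;>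
    simp_all [eq_comm]

lemma rmat_apply (n k : ℕ) (p q : Fin n × Fin n) :
    (Dten n k * Pmat n) p q = if q = (p.2, p.1) then sg n k p.1 p.2 else 0 := by
  rw [Matrix.mul_apply]
  simp only [Dten_apply, Pmat_apply, ite_mul, zero_mul, Finset.sum_ite_eq',
    Finset.mem_univ, if_true]
  obtain ⟨a, b⟩ := p; obtain ⟨c, d⟩ := q
  by_cases h1 : c = b <;> by_cases h2 : d = a <;> simp_all [Prod.ext_iff]

lemma A_apply (n k : ℕ) (p q : Fin n × Fin n × Fin n) :
    r12 n (Dten n k * Pmat n) p q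
      = if q = (p.2.1, p.1, p.2.2) then sg n k p.1 p.2.1 else 0 := by
  obtain ⟨a, b, c⟩ := p; obtain ⟨d, e, f⟩ := q
  simp only [r12, Matrix.reindex_apply, Matrix.submatrix_apply, Equiv.prodAssoc_symm_apply,
    kroneckerMap_apply, rmat_apply, Matrix.one_apply, Prod.ext_iff]
  by_cases h1 : d = b <;> by_cases h2 : e = a <;> by_cases h3 : f = c <;>
    simp_all [eq_comm]

lemma sg_sq (n k : ℕ) (a b : Fin n) : sg n k a b * sg n k a b = 1 := by
  unfold sg; split_ifs <;> norm_num

theorem stmt6 (n k m : ℕ) (hn : n = k + m) :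
    r12 n (Dten n k * Pmat n) * (op1 n (Dten n k) * op2 n (Dten n k))
        = (op1 n (Dten n k) * op2 n (Dten n k)) * r12 n (Dten n k * Pmat n)
    ∧ r12 n (Dten n k * Pmat n) * (op1 n (Dten n k) * op2 n (Pmat n))
        = (op1 n (Pmat n) * op2 n (Dten n k)) * r12 n (Dten n k * Pmat n)
    ∧ r12 n (Dten n k * Pmat n) * (op1 n (Pmat n) * op2 n (Dten n k))
        = (op1 n (Dten n k) * op2 n (Pmat n)) * r12 n (Dten n k * Pmat n) := by
  have hDD : ∀ p q, (op1 n (Dten n k) * op2 n (Dten n k)) p q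
      = if q = p then sg n k p.1 p.2.2 * sg n k p.2.1 p.2.2 else 0 := by
    intro p q
    rw [Matrix.mul_apply]
    simp only [op1D_apply, op2D_apply, ite_mul, zero_mul, Finset.sum_ite_eq',
      Finset.mem_univ, if_true]
    by_cases h : q = p <;> simp [h, mul_comm]
  have hDP : ∀ p q, (op1 n (Dten n k) * op2 n (Pmat n)) p q
      = if q = (p.1, p.2.2, p.2.1) then sg n k p.1 p.2.2 else 0 := by
    intro p q
    rw [Matrix.mul_apply]
    simp only [op1D_apply, op2P_apply, ite_mul, zero_mul, Finset.sum_ite_eq',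
      Finset.mem_univ, if_true]
    by_cases h : q = (p.1, p.2.2, p.2.1) <;> simp [h, mul_comm]
  have hPD : ∀ p q, (op1 n (Pmat n) * op2 n (Dten n k)) p q
      = if q = (p.2.2, p.2.1, p.1) then sg n k p.2.1 p.1 else 0 := by
    intro p q
    rw [Matrix.mul_apply]
    simp only [op1P_apply, op2D_apply, ite_mul, zero_mul, one_mul,
      Finset.sum_ite_eq', Finset.mem_univ, if_true]
  refine ⟨?_, ?_, ?_⟩
  · ext ⟨a, b, c⟩ ⟨d, e, f⟩
    rw [Matrix.mul_apply, Matrix.mul_apply,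
      Finset.sum_eq_single ((b, a, c) : Fin n × Fin n × Fin n),
      Finset.sum_eq_single ((a, b, c) : Fin n × Fin n × Fin n)]
    · simp only [A_apply, hDD]
      by_cases h : ((d, e, f) : Fin n × Fin n × Fin n) = (b, a, c) <;> simp [h] <;> ring
    · intro r _ hr; rw [hDD]; simp [hr]
    · simp
    · intro r _ hr; rw [A_apply]; simp [hr]
    · simp
  · ext ⟨a, b, c⟩ ⟨d, e, f⟩
    rw [Matrix.mul_apply, Matrix.mul_apply,
      Finset.sum_eq_single ((b, a, c) : Fin n × Fin n × Fin n),
      Finset.sum_eq_single ((c, b, a) : Fin n × Fin n × Fin n)]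
    · simp only [A_apply, hDP, hPD]
      by_cases h : ((d, e, f) : Fin n × Fin n × Fin n) = (b, c, a) <;> simp [h]
      rw [sg_comm n k a b, sg_comm n k b c]
    · intro r _ hr; rw [hPD]; simp [hr]
    · simp
    · intro r _ hr; rw [A_apply]; simp [hr]
    · simp
  · ext ⟨a, b, c⟩ ⟨d, e, f⟩
    rw [Matrix.mul_apply, Matrix.mul_apply,
      Finset.sum_eq_single ((b, a, c) : Fin n × Fin n × Fin n),
      Finset.sum_eq_single ((a, c, b) : Fin n × Fin n × Fin n)]
    · simp only [A_apply, hDP, hPD]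
      by_cases h : ((d, e, f) : Fin n × Fin n × Fin n) = (c, a, b) <;> simp [h]
      rw [sg_sq, sg_sq]
    · intro r _ hr; rw [hDP]; simp [hr]
    · simp
    · intro r _ hr; rw [A_apply]; simp [hr]
    · simp
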